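/- arXiv:1904.10493 — 6 statements merged into one kernel-verified Lean document; each statement's English description precedes it below -/
import Mathlib

section
/- Let U = {(x,y,z) ∈ ℝ³ : x,y,z > 0, x < y+z+1, y < x+z+1, z < x+y+1, 1 < x+y+z}, V = {(x,y,z) ∈ ℝ³ : x,y,z > 0, x+y+z = 1}, and W = {(x,y,z) ∈ ℝ³ : x,y,z > 0, y+z > x, x+z > y, x+y > z}. Then U equals the Minkowski sum of V and W, i.e., U = {v + w : v ∈ V, w ∈ W}. -/
/-!
Every point of `W` is uniquely `(Q + R, P + R, P + Q)` with `P, Q, R > 0`, so `p ∈ V + W` means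
`P + Q + R = (x + y + z - 1) / 2 =: t` together with `P > (y + z - x - 1) / 2 = t - x` and its two
analogues. Positive `P, Q, R` above three given bounds with prescribed sum `t` exist exactly when
`t` exceeds the sum of the positive parts of the bounds, and unfolding the positive parts gives
the seven inequalities defining `U`.
-/

lemma exists_lt_lt_lt_add_add_eq {a b c t : ℝ} (h : a + b + c < t) :
    ∃ P Q R : ℝ, a < P ∧ b < Q ∧ c < R ∧ P + Q + R = t :=
  ⟨a + (t - (a + b + c)) / 3, b + (t - (a + b + c)) / 3, c + (t - (a + b + c)) / 3,
    by linarith, by linarith, by linarith, by ring⟩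

lemma max_zero_add_max_zero_add_max_zero_lt {a b c t : ℝ} (h0 : 0 < t)
    (ha : a < t) (hb : b < t) (hc : c < t)
    (hab : a + b < t) (hac : a + c < t) (hbc : b + c < t) (habc : a + b + c < t) :
    max 0 a + max 0 b + max 0 c < t := by
  rcases le_total a 0 with ha' | ha' <;> rcases le_total b 0 with hb' | hb' <;>
    rcases le_total c 0 with hc' | hc' <;>
    simp only [max_eq_left, max_eq_right, ha', hb', hc'] <;> linarith

lemma exists_pos_lt_add_add_eq {a b c t : ℝ} (h0 : 0 < t)
    (ha : a < t) (hb : b < t) (hc : c < t)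
    (hab : a + b < t) (hac : a + c < t) (hbc : b + c < t) (habc : a + b + c < t) :
    ∃ P Q R : ℝ, 0 < P ∧ 0 < Q ∧ 0 < R ∧ a < P ∧ b < Q ∧ c < R ∧ P + Q + R = t := by
  obtain ⟨P, Q, R, hP, hQ, hR, hsum⟩ := exists_lt_lt_lt_add_add_eq
    (max_zero_add_max_zero_add_max_zero_lt h0 ha hb hc hab hac hbc habc)
  exact ⟨P, Q, R, (le_max_left _ _).trans_lt hP, (le_max_left _ _).trans_lt hQ,
    (le_max_left _ _).trans_lt hR, (le_max_right _ _).trans_lt hP,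
    (le_max_right _ _).trans_lt hQ, (le_max_right _ _).trans_lt hR, hsum⟩

theorem minkowski_sum_UVW :
    {p : ℝ × ℝ × ℝ | 0 < p.1 ∧ 0 < p.2.1 ∧ 0 < p.2.2 ∧
      p.1 < p.2.1 + p.2.2 + 1 ∧ p.2.1 < p.1 + p.2.2 + 1 ∧
      p.2.2 < p.1 + p.2.1 + 1 ∧ 1 < p.1 + p.2.1 + p.2.2} =
    {u : ℝ × ℝ × ℝ | ∃ v ∈ {p : ℝ × ℝ × ℝ | 0 < p.1 ∧ 0 < p.2.1 ∧ 0 < p.2.2 ∧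
        p.1 + p.2.1 + p.2.2 = 1},
      ∃ w ∈ {p : ℝ × ℝ × ℝ | 0 < p.1 ∧ 0 < p.2.1 ∧ 0 < p.2.2 ∧
        p.2.1 + p.2.2 > p.1 ∧ p.1 + p.2.2 > p.2.1 ∧ p.1 + p.2.1 > p.2.2},
      u = v + w} := by
  ext ⟨x, y, z⟩
  simp only [Set.mem_ofPred_eq]
  constructor
  · rintro ⟨hx, hy, hz, hx₁, hy₁, hz₁, hs⟩
    obtain ⟨P, Q, R, hP, hQ, hR, hPx, hQy, hRz, hsum⟩ :=
      exists_pos_lt_add_add_eq (a := (y + z - x - 1) / 2) (b := (x + z - y - 1) / 2)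
        (c := (x + y - z - 1) / 2) (t := (x + y + z - 1) / 2)
        (by linarith) (by linarith) (by linarith) (by linarith)
        (by linarith) (by linarith) (by linarith) (by linarith)
    refine ⟨(x - Q - R, y - P - R, z - P - Q), ⟨?_, ?_, ?_, ?_⟩,
      (Q + R, P + R, P + Q), ⟨?_, ?_, ?_, ?_, ?_, ?_⟩,
      by simp only [Prod.mk_add_mk, sub_add_add_cancel, sub_add_cancel]⟩ <;>
      dsimp only <;> linarith
  · rintro ⟨⟨v₁, v₂, v₃⟩, ⟨hv₁, hv₂, hv₃, hv⟩, ⟨w₁, w₂, w₃⟩, ⟨hw₁, hw₂, hw₃, hw₁₂, hw₁₃, hw₂₃⟩, hp⟩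
    simp only [Prod.mk_add_mk, Prod.mk.injEq] at hp
    obtain ⟨rfl, rfl, rfl⟩ := hp
    refine ⟨?_, ?_, ?_, ?_, ?_, ?_, ?_⟩ <;> linarith
end

section
/- Suppose 0 < d ≤ a ≤ b ≤ c. Define a₁ = a(b+c), b₁ = bc + d², c₁ = a² + bc, d₁ = (b+c)d. Then a₁/d₁ = a/d, b₁/d₁ ≤ b/d, and c₁/d₁ ≤ c/d. -/
theorem G1_params_ratios (a b c d : ℝ) (hd : 0 < d) (hda : d ≤ a) (hab : a ≤ b) (hbc : b ≤ c) :
    (a * (b + c)) / ((b + c) * d) = a / d ∧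
      (b * c + d ^ 2) / ((b + c) * d) ≤ b / d ∧
      (a ^ 2 + b * c) / ((b + c) * d) ≤ c / d := by
  have hb : 0 < b := lt_of_lt_of_le hd (hda.trans hab)
  have hbc0 : 0 < b + c := by linarith
  refine ⟨?_, ?_, ?_⟩
  · rw [div_eq_div_iff (by positivity) hd.ne']
    ring
  · rw [div_le_div_iff₀ (by positivity) hd]
    nlinarith [mul_nonneg (mul_nonneg hd.le (sub_nonneg.2 (hda.trans hab)))
      (by linarith : (0:ℝ) ≤ b + d)]
  · rw [div_le_div_iff₀ (by positivity) hd]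
    nlinarith [mul_nonneg (mul_nonneg hd.le (sub_nonneg.2 (hab.trans hbc)))
      (by linarith : (0:ℝ) ≤ c + a)]
end

section
/- Suppose 0 < d ≤ a ≤ b ≤ c. Define a₂ = 2ab, b₂ = a² + b², c₂ = c² + d², d₂ = 2cd. Then a₂/d₂ ≤ a/d, b₂/d₂ ≤ b/d, and c₂/d₂ ≤ c/d. -/
theorem G2_params_ratios (a b c d : ℝ) (hd : 0 < d) (hda : d ≤ a) (hab : a ≤ b) (hbc : b ≤ c) :
    (2 * a * b) / (2 * c * d) ≤ a / d ∧
      (a ^ 2 + b ^ 2) / (2 * c * d) ≤ b / d ∧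
      (c ^ 2 + d ^ 2) / (2 * c * d) ≤ c / d := by
  have hc : 0 < c := lt_of_lt_of_le hd (hda.trans (hab.trans hbc))
  have hcd : 0 < 2 * c * d := by positivity
  refine ⟨?_, ?_, ?_⟩ <;> rw [div_le_div_iff₀ hcd hd] <;> nlinarith [mul_nonneg (mul_nonneg hd.le (hd.le.trans hda)) (sub_nonneg.2 hbc),
      mul_nonneg (mul_nonneg hd.le (hd.le.trans (hda.trans hab))) (sub_nonneg.2 hbc),
      mul_nonneg hd.le (sub_nonneg.2 (mul_le_mul hab (hab.trans hbc) (hd.le.trans hda) (hd.le.trans (hda.trans hab)))),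
      mul_pos hc hd, sq_nonneg (c-d)]
end

section
/- Let Z = (1/√2)·[[1,1],[i,−i]] (a 2×2 complex matrix). Then Z is invertible, and the row vector of the binary disequality function (0,1,1,0) (indexed by (00,01,10,11)) transformed by (Z⁻¹)⊗² equals the row vector of the binary equality function (1,0,0,1). -/
open Kronecker Matrix

theorem holographic_diseq_to_eq :
    let Z : Matrix (Fin 2) (Fin 2) ℂ :=
      (1 / Real.sqrt 2 : ℝ) • !![1, 1; Complex.I, -Complex.I]
    let diseq : Fin 2 × Fin 2 → ℂ := fun p => if p.1 = p.2 then 0 else 1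
    let eq2 : Fin 2 × Fin 2 → ℂ := fun p => if p.1 = p.2 then 1 else 0
    IsUnit Z ∧ Matrix.vecMul diseq (Z⁻¹ ⊗ₖ Z⁻¹) = eq2 := by
  intro Z diseq eq2
  have hs : ((Real.sqrt 2 : ℝ) : ℂ) * ((Real.sqrt 2 : ℝ) : ℂ) = 2 := by
    rw [← Complex.ofReal_mul, Real.mul_self_sqrt (by norm_num)]
    norm_num
  have hs0 : ((Real.sqrt 2 : ℝ) : ℂ) ≠ 0 := by
    intro h
    rw [h] at hs; simp at hs
  have hZW : Z * ((1 / Real.sqrt 2 : ℝ) • !![1, -Complex.I; 1, Complex.I]) = 1 := by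
    show ((1 / Real.sqrt 2 : ℝ) • !![1, 1; Complex.I, -Complex.I]) *
      ((1 / Real.sqrt 2 : ℝ) • !![1, -Complex.I; 1, Complex.I]) = 1
    ext i j
    fin_cases i <;> fin_cases j <;>
      simp [Matrix.mul_apply, Fin.sum_univ_two, Complex.ext_iff, div_eq_inv_mul] <;>
      field_simp <;>
      ring_nf <;>
      simp [Complex.I_sq, hs] <;> ring_nf <;>
      rw [show (((Real.sqrt 2 : ℝ):ℂ))⁻¹ * (((Real.sqrt 2 : ℝ):ℂ))⁻¹ = (1:ℂ)/2 by
        rw [← mul_inv, hs]; norm_num] <;> norm_num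
  have hinv : Z⁻¹ = ((1 / Real.sqrt 2 : ℝ) • !![1, -Complex.I; 1, Complex.I]) :=
    inv_eq_right_inv hZW
  constructor
  · exact @isUnit_of_invertible _ _ Z (invertibleOfRightInverse _ _ hZW)
  · funext p
    obtain ⟨i, j⟩ := p
    fin_cases i <;> fin_cases j <;>
      simp [hinv, vecMul, dotProduct, diseq, eq2, Matrix.kroneckerMap_apply,
        Fintype.sum_prod_type, Fin.sum_univ_two, Complex.ext_iff] <;>
      field_simp <;> ring_nf <;>
      simp [Complex.I_sq] <;> ring_nf <;>
      first
        | rfl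
        | (rw [show (((Real.sqrt 2 : ℝ):ℂ))⁻¹ * (((Real.sqrt 2 : ℝ):ℂ))⁻¹ = (1:ℂ)/2 by
            rw [← mul_inv, hs]; norm_num]; norm_num)
end

section
/- Let Z = (1/√2)·[[1,1],[i,−i]]. Let f be the 4-ary function on bits with f(x₁x₂x₃x₄) = d if the string has Hamming weight 0 or 4 according to pattern (f(0000)=f(1111)=d, f(0011)=f(1100)=a, f(0110)=f(1001)=b, f(0101)=f(1010)=c, and f = 0 otherwise). Then Z⊗⁴·f (f viewed as a column vector in ℂ¹⁶) equals (1/2) times the vector g with g(0000)=g(1111)=a+b+c+d, g(0011)=g(1100)=−a+b+c−d, g(0110)=g(1001)=a−b+c−d, g(0101)=g(1010)=a+b−c−d, and g = 0 on all strings of odd Hamming weight. -/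
/-!
Pulling the scalar out of each factor, `Z⊗⁴ = (1/√2)⁴ • M⊗⁴ = ¼ • M⊗⁴` with `M = [[1,1],[i,-i]]`.
Both `f` and `g` are even-weight signatures determined by four values, and `M⊗⁴` maps the one
with values `(d, a, b, c)` to twice the one with the Hadamard-transformed values; this is a
finite check over the 16 bit strings, using only `i² = -1`.
-/

open Kronecker Matrix

def evenSignature {R : Type*} [Zero R] (w x y z : R) : Fin 2 × (Fin 2 × (Fin 2 × Fin 2)) → R :=
  fun v =>
    if v.1 = v.2.1 ∧ v.2.1 = v.2.2.1 ∧ v.2.2.1 = v.2.2.2 then w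
    else if v.1 = v.2.1 ∧ v.2.2.1 = v.2.2.2 then x
    else if v.1 = v.2.2.2 ∧ v.2.1 = v.2.2.1 then y
    else if v.1 = v.2.2.1 ∧ v.2.1 = v.2.2.2 then z
    else 0

theorem smul_kronecker_four {R α : Type*} [Mul α] [Monoid R] [MulAction R α]
    [IsScalarTower R α α] [SMulCommClass R α α] {m n : Type*} (r : R) (A : Matrix m n α) :
    (r • A) ⊗ₖ ((r • A) ⊗ₖ ((r • A) ⊗ₖ (r • A))) = r ^ 4 • A ⊗ₖ (A ⊗ₖ (A ⊗ₖ A)) := by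
  simp only [smul_kronecker, kronecker_smul, smul_smul, pow_succ, pow_zero, one_mul]

theorem one_div_sqrt_two_pow_four : (1 / Real.sqrt 2) ^ 4 = 1 / 4 := by
  rw [div_pow, one_pow, show 4 = 2 * 2 from rfl, pow_mul, Real.sq_sqrt zero_le_two]
  norm_num

theorem kronecker_four_mulVec_evenSignature (a b c d : ℂ) :
    let M : Matrix (Fin 2) (Fin 2) ℂ := !![1, 1; Complex.I, -Complex.I]
    M ⊗ₖ (M ⊗ₖ (M ⊗ₖ M)) *ᵥ evenSignature d a b c =
      (2 : ℂ) • evenSignature (a + b + c + d) (-a + b + c - d) (a - b + c - d) (a + b - c - d) := by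
  intro M
  funext ⟨i, j, k, l⟩
  fin_cases i <;> fin_cases j <;> fin_cases k <;> fin_cases l <;>
    · simp [M, mulVec, dotProduct, Fintype.sum_prod_type, evenSignature]
      ring_nf

theorem holographic_eight_vertex (a b c d : ℂ) :
    let Z : Matrix (Fin 2) (Fin 2) ℂ :=
      (1 / Real.sqrt 2 : ℝ) • !![1, 1; Complex.I, -Complex.I]
    let f : Fin 2 × (Fin 2 × (Fin 2 × Fin 2)) → ℂ := fun x =>
      if x.1 = x.2.1 ∧ x.2.1 = x.2.2.1 ∧ x.2.2.1 = x.2.2.2 then d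
      else if x.1 = x.2.1 ∧ x.2.2.1 = x.2.2.2 then a
      else if x.1 = x.2.2.2 ∧ x.2.1 = x.2.2.1 then b
      else if x.1 = x.2.2.1 ∧ x.2.1 = x.2.2.2 then c
      else 0
    let g : Fin 2 × (Fin 2 × (Fin 2 × Fin 2)) → ℂ := fun x =>
      if x.1 = x.2.1 ∧ x.2.1 = x.2.2.1 ∧ x.2.2.1 = x.2.2.2 then a + b + c + d
      else if x.1 = x.2.1 ∧ x.2.2.1 = x.2.2.2 then -a + b + c - d
      else if x.1 = x.2.2.2 ∧ x.2.1 = x.2.2.1 then a - b + c - d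
      else if x.1 = x.2.2.1 ∧ x.2.1 = x.2.2.2 then a + b - c - d
      else 0
    Matrix.mulVec (Z ⊗ₖ (Z ⊗ₖ (Z ⊗ₖ Z))) f = (1 / 2 : ℂ) • g := by
  intro Z f g
  have hf : f = evenSignature d a b c := rfl
  have hg : g = evenSignature (a + b + c + d) (-a + b + c - d) (a - b + c - d) (a + b - c - d) :=
    rfl
  rw [smul_kronecker_four, one_div_sqrt_two_pow_four, smul_mulVec, hf,
    kronecker_four_mulVec_evenSignature, hg, ← smul_assoc]
  congr 1
  rw [Complex.real_smul]
  norm_num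
end

section
/- Let Γ be a finite graph with nonnegative real edge weights and four distinguished dangling edges i₁, i₂, i₃, i₄. For X a subset of {i₁,i₂,i₃,i₄}, let f(X) be the sum over perfect matchings of Γ that use exactly the dangling edges in X, of the product of weights of matched edges. Suppose f is supported on subsets of even size (even parity). Then f({i₁,i₂})·f({i₃,i₄}) ≤ f({i₂,i₃})·f({i₁,i₄}) + f({i₂,i₄})·f({i₁,i₃}) + f(∅)·f({i₁,i₂,i₃,i₄}). -/
/-!
Fix perfect matchings `M` with pattern `{0, 1}` and `N` with pattern `{2, 3}`. At every vertex,
the degree in `M ∆ N` plus the number of dangling edges attached there is at most `2`; since a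
connected graph has at least as many edges as vertices minus one, the connected component of
`dangle 0` in `M ∆ N` therefore carries at most two dangling edges, among them edge `0`.
Exchanging `M` and `N` along that component is a weight-preserving involution on pairs of edge
sets, and it turns `(M, N)` into perfect matchings with complementary patterns `Z`, `Zᶜ` where
`Z ∈ {∅, {1}, {1, 2}, {1, 3}}`. Parity kills `Z = {1}`, and summing over pairs gives the
inequality.
-/

open scoped Classical

/-- `IsPM G dangle M X` : `M` is a set of internal edges of the matchgate `G` forming,
together with the dangling edges in `X` (dangling edge `i` is attached to the internal
vertex `dangle i`), a perfect matching: every internal vertex is covered exactly once. -/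
def IsPM {V : Type} [DecidableEq V] (G : SimpleGraph V) [Fintype V] [DecidableRel G.Adj]
    (dangle : Fin 4 → V) (M : Finset (Sym2 V)) (X : Finset (Fin 4)) : Prop :=
  M ⊆ G.edgeFinset ∧
    ∀ v : V, (M.filter (fun e => v ∈ e)).card + (X.filter (fun i => dangle i = v)).card = 1

/-- The signature of a 4-ary matchgate: `matchgateSig G w dangle X` is the sum, over
perfect matchings whose dangling-edge pattern is exactly `X`, of the product of the
weights of the matched internal edges. -/
noncomputable def matchgateSig {V : Type} [DecidableEq V] (G : SimpleGraph V) [Fintype V]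
    [DecidableRel G.Adj] (w : Sym2 V → ℝ) (dangle : Fin 4 → V) (X : Finset (Fin 4)) : ℝ :=
  ∑ M ∈ (Finset.univ : Finset (Finset (Sym2 V))),
    if IsPM G dangle M X then ∏ e ∈ M, w e else 0

open Finset SimpleGraph
open scoped symmDiff

theorem Finset.filter_symmDiff {α : Type*} [DecidableEq α] (p : α → Prop) [DecidablePred p]
    (s t : Finset α) : {a ∈ s ∆ t | p a} = {a ∈ s | p a} ∆ {a ∈ t | p a} := by
  ext a
  simp only [mem_filter, mem_symmDiff]
  tauto

theorem Finset.prod_symmDiff_mul_prod_symmDiff {α β : Type*} [DecidableEq α] [CommMonoid β]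
    {s t u : Finset α} (hu : u ⊆ s ∆ t) (f : α → β) :
    (∏ a ∈ s ∆ u, f a) * ∏ a ∈ t ∆ u, f a = (∏ a ∈ s, f a) * ∏ a ∈ t, f a := by
  have hus : u \ s = t ∩ u := by
    ext a
    have := @hu a
    simp only [mem_sdiff, mem_inter, mem_symmDiff] at *
    tauto
  have hut : u \ t = s ∩ u := by
    ext a
    have := @hu a
    simp only [mem_sdiff, mem_inter, mem_symmDiff] at *
    tauto
  rw [symmDiff_def, symmDiff_def, sup_eq_union, sup_eq_union,
    prod_union disjoint_sdiff_sdiff, prod_union disjoint_sdiff_sdiff, hus, hut,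
    ← prod_inter_mul_prod_sdiff s u, ← prod_inter_mul_prod_sdiff t u]
  ac_rfl

lemma SimpleGraph.ConnectedComponent.degree_toSimpleGraph {V : Type} [Fintype V]
    {G : SimpleGraph V} [DecidableRel G.Adj] (C : G.ConnectedComponent) (u : C) :
    C.toSimpleGraph.degree u = G.degree u := by
  unfold ConnectedComponent.toSimpleGraph
  convert degree_induce_of_neighborSet_subset (G := G) (s := C.supp) (v := u)
    fun x hx => C.mem_supp_of_adj_mem_supp u.2 hx
  exact Iff.rfl

theorem SimpleGraph.Connected.sum_le_two_of_degree_add_le_two {W : Type} [Fintype W]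
    {G : SimpleGraph W} [DecidableRel G.Adj] (hG : G.Connected) (c : W → ℕ)
    (h : ∀ w, G.degree w + c w ≤ 2) : ∑ w, c w ≤ 2 := by
  have hedges := hG.card_vert_le_card_edgeSet_add_one
  rw [Nat.card_eq_fintype_card, Nat.card_eq_fintype_card, ← edgeFinset_card] at hedges
  have hsum : ∑ w, (G.degree w + c w) ≤ ∑ _w : W, 2 := sum_le_sum fun w _ => h w
  rw [sum_add_distrib, G.sum_degrees_eq_twice_card_edges, sum_const, card_univ,
    smul_eq_mul] at hsum
  omega

section Components

variable {V : Type}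

abbrev edgeGraph (D : Finset (Sym2 V)) : SimpleGraph V := fromEdgeSet ↑D

lemma edgeGraph_reachable_of_mem_of_mem {D : Finset (Sym2 V)} {v₀ x y : V} {e : Sym2 V} (he : e ∈ D)
    (hx : x ∈ e) (hy : y ∈ e) (hr : (edgeGraph D).Reachable v₀ x) :
    (edgeGraph D).Reachable v₀ y := by
  by_cases hxy : x = y
  · exact hxy ▸ hr
  · refine hr.trans (Adj.reachable ?_)
    rw [fromEdgeSet_adj, ← (Sym2.mem_and_mem_iff hxy).mp ⟨hx, hy⟩]
    exact ⟨he, hxy⟩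

noncomputable def componentEdges (D : Finset (Sym2 V)) (v₀ : V) : Finset (Sym2 V) :=
  {e ∈ D | ∀ x ∈ e, (edgeGraph D).Reachable v₀ x}

lemma componentEdges_subset (D : Finset (Sym2 V)) (v₀ : V) : componentEdges D v₀ ⊆ D :=
  filter_subset _ _

end Components

section EdgeSets

variable {V : Type} [DecidableEq V]

def edgeDegree (M : Finset (Sym2 V)) (v : V) : ℕ := #{e ∈ M | v ∈ e}

lemma edgeDegree_symmDiff_le (M N : Finset (Sym2 V)) (v : V) :
    edgeDegree (M ∆ N) v ≤ edgeDegree M v + edgeDegree N v := by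
  calc #{e ∈ M ∆ N | v ∈ e} ≤ #{e ∈ M ∪ N | v ∈ e} :=
        card_le_card (filter_subset_filter _ symmDiff_subset_union)
    _ ≤ edgeDegree M v + edgeDegree N v := by rw [filter_union]; exact card_union_le _ _

lemma degree_edgeGraph_le [Fintype V] (D : Finset (Sym2 V)) (v : V) :
    (edgeGraph D).degree v ≤ edgeDegree D v := by
  rw [← card_incidenceFinset_eq_degree, incidenceFinset_eq_filter]
  refine card_le_card (filter_subset_filter _ fun e he => ?_)
  rw [mem_edgeFinset, edgeSet_fromEdgeSet] at he
  exact he.1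

lemma filter_mem_componentEdges (D : Finset (Sym2 V)) (v₀ v : V) :
    {e ∈ componentEdges D v₀ | v ∈ e} =
      if (edgeGraph D).Reachable v₀ v then {e ∈ D | v ∈ e} else ∅ := by
  split_ifs with hv
  · ext e
    simp only [componentEdges, mem_filter]
    exact ⟨fun h => ⟨h.1.1, h.2⟩,
      fun h => ⟨⟨h.1, fun x hx => edgeGraph_reachable_of_mem_of_mem h.1 h.2 hx hv⟩, h.2⟩⟩
  · exact filter_eq_empty_iff.mpr fun e he hve => hv ((mem_filter.mp he).2 v hve)

lemma edgeDegree_symmDiff_componentEdges (M N : Finset (Sym2 V)) (v₀ v : V) :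
    edgeDegree (M ∆ componentEdges (M ∆ N) v₀) v =
      if (edgeGraph (M ∆ N)).Reachable v₀ v then edgeDegree N v else edgeDegree M v := by
  rw [edgeDegree, filter_symmDiff, filter_mem_componentEdges]
  split_ifs
  · rw [← filter_symmDiff, symmDiff_symmDiff_cancel_left, edgeDegree]
  · rw [← bot_eq_empty, symmDiff_bot, edgeDegree]

section Patterns

variable [Fintype V] {G : SimpleGraph V} [DecidableRel G.Adj] {dangle : Fin 4 → V}

noncomputable def reachableDangles (dangle : Fin 4 → V) (D : Finset (Sym2 V)) (v₀ : V) :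
    Finset (Fin 4) :=
  {i | (edgeGraph D).Reachable v₀ (dangle i)}

lemma filter_symmDiff_reachableDangles (X : Finset (Fin 4)) (D : Finset (Sym2 V)) (v₀ v : V) :
    {i ∈ X ∆ reachableDangles dangle D v₀ | dangle i = v} =
      if (edgeGraph D).Reachable v₀ v then {i ∈ Xᶜ | dangle i = v}
      else {i ∈ X | dangle i = v} := by
  split_ifs with hv <;> ext i <;>
    simp only [reachableDangles, mem_filter, mem_symmDiff, mem_compl, mem_univ, true_and] <;>
    constructor <;> rintro ⟨h, rfl⟩ <;> tauto

theorem IsPM.symmDiff_componentEdges {M N : Finset (Sym2 V)} {X : Finset (Fin 4)}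
    (hM : IsPM G dangle M X) (hN : IsPM G dangle N Xᶜ) (v₀ : V) :
    IsPM G dangle (M ∆ componentEdges (M ∆ N) v₀)
      (X ∆ reachableDangles dangle (M ∆ N) v₀) := by
  refine ⟨?_, fun v => ?_⟩
  · calc M ∆ componentEdges (M ∆ N) v₀ ⊆ M ∪ (M ∪ N) :=
          symmDiff_subset_union.trans
            (union_subset_union_right ((componentEdges_subset _ _).trans symmDiff_subset_union))
      _ ⊆ G.edgeFinset := union_subset hM.1 (union_subset hM.1 hN.1)
  · have hdeg := edgeDegree_symmDiff_componentEdges M N v₀ v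
    rw [edgeDegree] at hdeg
    rw [hdeg, filter_symmDiff_reachableDangles]
    split_ifs
    · exact hN.2 v
    · exact hM.2 v

theorem IsPM.degree_add_card_dangles_le_two {M N : Finset (Sym2 V)} {X : Finset (Fin 4)}
    (hM : IsPM G dangle M X) (hN : IsPM G dangle N Xᶜ) (v : V) :
    (edgeGraph (M ∆ N)).degree v + #{i | dangle i = v} ≤ 2 := by
  have hsplit : #{i ∈ X | dangle i = v} + #{i ∈ Xᶜ | dangle i = v} = #{i | dangle i = v} := by
    rw [← card_union_of_disjoint (disjoint_filter_filter disjoint_compl_right), ← filter_union,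
      union_compl]
  have hdeg := (degree_edgeGraph_le (M ∆ N) v).trans (edgeDegree_symmDiff_le M N v)
  have hMv := hM.2 v
  have hNv := hN.2 v
  unfold edgeDegree at hdeg
  omega

theorem IsPM.card_reachableDangles_le_two {M N : Finset (Sym2 V)} {X : Finset (Fin 4)}
    (hM : IsPM G dangle M X) (hN : IsPM G dangle N Xᶜ) (v₀ : V) :
    #(reachableDangles dangle (M ∆ N) v₀) ≤ 2 := by
  let C := (edgeGraph (M ∆ N)).connectedComponentMk v₀
  calc #(reachableDangles dangle (M ∆ N) v₀)
      = ∑ v ∈ {v | (edgeGraph (M ∆ N)).Reachable v₀ v}, #{i | dangle i = v} := by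
        rw [card_eq_sum_card_fiberwise (t := {v | (edgeGraph (M ∆ N)).Reachable v₀ v})
          fun i hi => by simpa [reachableDangles] using hi]
        refine sum_congr rfl fun v hv => congrArg card ?_
        ext i
        simp only [reachableDangles, mem_filter, mem_univ, true_and] at hv ⊢
        exact ⟨fun h => h.2, fun h => ⟨h ▸ hv, h⟩⟩
    _ = ∑ u : C, #{i | dangle i = u} :=
        sum_subtype _ (fun v => by
          simp only [mem_filter, mem_univ, true_and]
          exact reachable_comm.trans ConnectedComponent.eq.symm) _
    _ ≤ 2 := C.connected_toSimpleGraph.sum_le_two_of_degree_add_le_two _ fun u =>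
        C.degree_toSimpleGraph u ▸ hM.degree_add_card_dangles_le_two hN u

end Patterns

end EdgeSets

section PairWeight

variable {V : Type}

def pairWeight (w : Sym2 V → ℝ) (p : Finset (Sym2 V) × Finset (Sym2 V)) : ℝ :=
  (∏ e ∈ p.1, w e) * ∏ e ∈ p.2, w e

lemma pairWeight_nonneg {w : Sym2 V → ℝ} (hw : ∀ e, 0 ≤ w e)
    (p : Finset (Sym2 V) × Finset (Sym2 V)) : 0 ≤ pairWeight w p :=
  mul_nonneg (prod_nonneg fun e _ => hw e) (prod_nonneg fun e _ => hw e)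

end PairWeight

section Signature

variable {V : Type} [DecidableEq V]

noncomputable def swapAlongComponent (v₀ : V) (p : Finset (Sym2 V) × Finset (Sym2 V)) :
    Finset (Sym2 V) × Finset (Sym2 V) :=
  (p.1 ∆ componentEdges (p.1 ∆ p.2) v₀, p.2 ∆ componentEdges (p.1 ∆ p.2) v₀)

lemma swapAlongComponent_involutive (v₀ : V) : Function.Involutive (swapAlongComponent v₀) := by
  intro p
  have hD : (p.1 ∆ componentEdges (p.1 ∆ p.2) v₀) ∆
      (p.2 ∆ componentEdges (p.1 ∆ p.2) v₀) = p.1 ∆ p.2 := by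
    rw [symmDiff_symmDiff_symmDiff_comm, symmDiff_self, symmDiff_bot]
  simp only [swapAlongComponent, hD, symmDiff_symmDiff_cancel_right]

lemma pairWeight_swapAlongComponent (w : Sym2 V → ℝ) (v₀ : V)
    (p : Finset (Sym2 V) × Finset (Sym2 V)) :
    pairWeight w (swapAlongComponent v₀ p) = pairWeight w p :=
  prod_symmDiff_mul_prod_symmDiff (componentEdges_subset _ _) w

variable [Fintype V]
variable (G : SimpleGraph V) [DecidableRel G.Adj] (w : Sym2 V → ℝ) (dangle : Fin 4 → V)

noncomputable def perfectMatchings (X : Finset (Fin 4)) : Finset (Finset (Sym2 V)) :=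
  {M | IsPM G dangle M X}

lemma matchgateSig_mul_matchgateSig (X Y : Finset (Fin 4)) :
    matchgateSig G w dangle X * matchgateSig G w dangle Y =
      ∑ p ∈ perfectMatchings G dangle X ×ˢ perfectMatchings G dangle Y, pairWeight w p := by
  rw [matchgateSig, matchgateSig, ← sum_filter, ← sum_filter, sum_mul_sum, sum_product]
  rfl

variable {G w dangle}

lemma sum_pairWeight_le_of_swapAlongComponent_mem (hw : ∀ e, 0 ≤ w e) (v₀ : V)
    {s : Finset (Finset (Sym2 V) × Finset (Sym2 V))} {X Y : Finset (Fin 4)}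
    (hs : ∀ p ∈ s, swapAlongComponent v₀ p ∈
      perfectMatchings G dangle X ×ˢ perfectMatchings G dangle Y) :
    ∑ p ∈ s, pairWeight w p ≤ matchgateSig G w dangle X * matchgateSig G w dangle Y := by
  rw [matchgateSig_mul_matchgateSig]
  calc ∑ p ∈ s, pairWeight w p
      = ∑ p ∈ s.image (swapAlongComponent v₀), pairWeight w p := by
        rw [sum_image fun p _ q _ h => (swapAlongComponent_involutive v₀).injective h]
        exact sum_congr rfl fun p _ => (pairWeight_swapAlongComponent w v₀ p).symm
    _ ≤ _ := sum_le_sum_of_subset_of_nonneg (image_subset_iff.mpr hs)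
        fun p _ _ => pairWeight_nonneg hw p

theorem IsPM.swapAlongComponent_mem {M N : Finset (Sym2 V)} {X : Finset (Fin 4)}
    (hM : IsPM G dangle M X) (hN : IsPM G dangle N Xᶜ) (v₀ : V) :
    swapAlongComponent v₀ (M, N) ∈
      perfectMatchings G dangle (X ∆ reachableDangles dangle (M ∆ N) v₀) ×ˢ
        perfectMatchings G dangle (X ∆ reachableDangles dangle (M ∆ N) v₀)ᶜ := by
  have hN' := hN.symmDiff_componentEdges (X := Xᶜ) (by rwa [compl_compl]) v₀
  have hcompl : ∀ S : Finset (Fin 4), Xᶜ ∆ S = (X ∆ S)ᶜ := fun S => by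
    ext i
    simp only [mem_symmDiff, mem_compl]
    tauto
  rw [symmDiff_comm N M, hcompl] at hN'
  simp only [swapAlongComponent, perfectMatchings, mem_product, mem_filter, mem_univ, true_and]
  exact ⟨hM.symmDiff_componentEdges hN v₀, hN'⟩

end Signature

lemma symmDiff_mem_of_zero_mem_of_card_le_two {S : Finset (Fin 4)} (h0 : 0 ∈ S) (h2 : #S ≤ 2) :
    {0, 1} ∆ S ∈ ({∅, {1}, {1, 2}, {1, 3}} : Finset (Finset (Fin 4))) := by
  revert S
  decide

theorem matchgate_signature_inequality {V : Type} [DecidableEq V] (G : SimpleGraph V)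
    [Fintype V] [DecidableRel G.Adj] (w : Sym2 V → ℝ) (dangle : Fin 4 → V)
    (hw : ∀ e, 0 ≤ w e)
    (heven : ∀ X : Finset (Fin 4), ¬ Even X.card → matchgateSig G w dangle X = 0) :
    matchgateSig G w dangle {0, 1} * matchgateSig G w dangle {2, 3} ≤
      matchgateSig G w dangle {1, 2} * matchgateSig G w dangle {0, 3} +
      matchgateSig G w dangle {1, 3} * matchgateSig G w dangle {0, 2} +
      matchgateSig G w dangle ∅ * matchgateSig G w dangle Finset.univ := by
  let f := matchgateSig G w dangle
  let T := perfectMatchings G dangle {0, 1} ×ˢ perfectMatchings G dangle {0, 1}ᶜ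
  let Z : Finset (Sym2 V) × Finset (Sym2 V) → Finset (Fin 4) := fun p =>
    {0, 1} ∆ reachableDangles dangle (p.1 ∆ p.2) (dangle 0)
  have hT : ∀ p ∈ T, IsPM G dangle p.1 {0, 1} ∧ IsPM G dangle p.2 {0, 1}ᶜ := fun p hp => by
    simpa [T, perfectMatchings] using hp
  have hZ : ∀ p ∈ T, Z p ∈ ({∅, {1}, {1, 2}, {1, 3}} : Finset (Finset (Fin 4))) :=
    fun p hp => symmDiff_mem_of_zero_mem_of_card_le_two (by simp [reachableDangles])
        ((hT p hp).1.card_reachableDangles_le_two (hT p hp).2 _)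
  have hfiber : ∀ Y, ∑ p ∈ T with Z p = Y, pairWeight w p ≤ f Y * f Yᶜ := fun Y =>
    sum_pairWeight_le_of_swapAlongComponent_mem hw (dangle 0) fun p hp => by
      obtain ⟨hpT, rfl⟩ := mem_filter.mp hp
      exact (hT p hpT).1.swapAlongComponent_mem (hT p hpT).2 _
  have h1 : f {1} = 0 := heven _ (by decide)
  calc f {0, 1} * f {2, 3} = ∑ p ∈ T, pairWeight w p := by
        rw [show ({2, 3} : Finset (Fin 4)) = {0, 1}ᶜ by decide]
        exact matchgateSig_mul_matchgateSig G w dangle _ _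
    _ = ∑ Y ∈ {∅, {1}, {1, 2}, {1, 3}}, ∑ p ∈ T with Z p = Y, pairWeight w p :=
        (sum_fiberwise_of_maps_to hZ _).symm
    _ ≤ ∑ Y ∈ {∅, {1}, {1, 2}, {1, 3}}, f Y * f Yᶜ := sum_le_sum fun Y _ => hfiber Y
    _ = f {1, 2} * f {0, 3} + f {1, 3} * f {0, 2} + f ∅ * f univ := by
        rw [sum_insert (by decide), sum_insert (by decide), sum_insert (by decide), sum_singleton,
          h1, compl_empty, show ({1, 2} : Finset (Fin 4))ᶜ = {0, 3} by decide,
          show ({1, 3} : Finset (Fin 4))ᶜ = {0, 2} by decide]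
        ring
end
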